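/- arXiv:2312.17497 — 2 statements merged into one kernel-verified Lean document; each statement's English description precedes it below -/
import Mathlib

section
/- Let 0 ≤ q < 3/2 and consider the path of shrinking round circles c : [0,1) → Imm(S¹,ℝ²), c(t)(θ) = (1−t)(cos 2πθ, sin 2πθ). Then the G^q-length of this path is finite; more precisely ∫₀¹ G^q_{c(t)}(∂_t c, ∂_t c)^{1/2} dt ≤ C/(3/2 − q) for a constant C independent of q. In particular there is a path of finite G^q-length that leaves the space of immersions. -/
open MeasureTheory intervalIntegral
open scoped BigOperators ENNReal RealInnerProductSpace

noncomputable section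

/-- Euclidean space `ℝ^d`. -/
abbrev Edim (d : ℕ) := EuclideanSpace ℝ (Fin d)

/-- `n`-th Fourier coefficient of a (1-periodic) function `f : ℝ → ℝ`,
identifying `S¹ = ℝ/ℤ`. -/
def fCoeff (f : ℝ → ℝ) (n : ℤ) : ℂ :=
  ∫ θ in (0:ℝ)..1,
    Complex.exp (-2 * (Real.pi : ℂ) * Complex.I * (n : ℂ) * (θ : ℂ)) * (f θ : ℂ)

/-- Squared norm `|f̂(n)|²` of the `n`-th Fourier coefficient of `f : S¹ → ℝ^d`. -/
def coeffNormSq {d : ℕ} (f : ℝ → Edim d) (n : ℤ) : ℝ :=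
  ∑ i : Fin d, ‖fCoeff (fun θ => f θ i) n‖ ^ 2

/-- Homogeneous Sobolev seminorm squared `‖f‖²_{Ḣ^q} = Σ |n|^{2q} |f̂(n)|²`. -/
def homSobSq {d : ℕ} (q : ℝ) (f : ℝ → Edim d) : ℝ :=
  ∑' n : ℤ, |(n : ℝ)| ^ (2 * q) * coeffNormSq f n

/-- Homogeneous Sobolev seminorm `‖f‖_{Ḣ^q}`. -/
def homSobNorm {d : ℕ} (q : ℝ) (f : ℝ → Edim d) : ℝ := Real.sqrt (homSobSq q f)

/-- Full Sobolev norm squared `‖f‖²_{H^q} = Σ (1+n²)^q |f̂(n)|²`. -/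
def sobSq {d : ℕ} (q : ℝ) (f : ℝ → Edim d) : ℝ :=
  ∑' n : ℤ, (1 + (n : ℝ) ^ 2) ^ q * coeffNormSq f n

/-- Full Sobolev norm `‖f‖_{H^q}`. -/
def sobNorm {d : ℕ} (q : ℝ) (f : ℝ → Edim d) : ℝ := Real.sqrt (sobSq q f)

/-- Membership in the Sobolev space `H^q(S¹, ℝ^d)`, viewed as 1-periodic
functions on `ℝ`: periodic, integrable on a period and with finite `H^q`-norm. -/
def InH {d : ℕ} (q : ℝ) (f : ℝ → Edim d) : Prop :=
  Function.Periodic f 1 ∧ IntegrableOn f (Set.Ioc (0:ℝ) 1) ∧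
    Summable (fun n : ℤ => (1 + (n : ℝ) ^ 2) ^ q * coeffNormSq f n)

/-- A tangent vector along a curve of class `H^r`, `r > 3/2`: a continuous
1-periodic function of class `H^r` (with values in the vector space `ℝ^d`). -/
def TangentH {d : ℕ} (r : ℝ) (h : ℝ → Edim d) : Prop :=
  Continuous h ∧ InH r h

/-- Scalar version: homogeneous Sobolev seminorm squared of `f : S¹ → ℝ`. -/
def homSobSq₁ (q : ℝ) (f : ℝ → ℝ) : ℝ :=
  ∑' n : ℤ, |(n : ℝ)| ^ (2 * q) * ‖fCoeff f n‖ ^ 2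

/-- Scalar version: full Sobolev norm squared of `f : S¹ → ℝ`. -/
def sobSq₁ (q : ℝ) (f : ℝ → ℝ) : ℝ :=
  ∑' n : ℤ, (1 + (n : ℝ) ^ 2) ^ q * ‖fCoeff f n‖ ^ 2

/-- Scalar version: membership in `H^q(S¹, ℝ)`. -/
def InH₁ (q : ℝ) (f : ℝ → ℝ) : Prop :=
  Function.Periodic f 1 ∧ IntegrableOn f (Set.Ioc (0:ℝ) 1) ∧
    Summable (fun n : ℤ => (1 + (n : ℝ) ^ 2) ^ q * ‖fCoeff f n‖ ^ 2)

/-- The length `l_c = ∫_{S¹} |c_θ| dθ` of a curve. -/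
def curveLen {d : ℕ} (c : ℝ → Edim d) : ℝ := ∫ θ in (0:ℝ)..1, ‖deriv c θ‖

/-- The constant-speed reparametrization `ψ_c(θ) = l_c⁻¹ ∫_0^θ |c_θ(σ)| dσ`. -/
def psi {d : ℕ} (c : ℝ → Edim d) (θ : ℝ) : ℝ :=
  (curveLen c)⁻¹ * ∫ σ in (0:ℝ)..θ, ‖deriv c σ‖

/-- The inverse `ψ_c⁻¹` of the constant-speed reparametrization. -/
def psiInv {d : ℕ} (c : ℝ → Edim d) : ℝ → ℝ := Function.invFun (psi c)

/-- Squared `L²(S¹)`-norm. -/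
def L2Sq {d : ℕ} (f : ℝ → Edim d) : ℝ := ∫ θ in (0:ℝ)..1, ‖f θ‖ ^ 2

/-- `‖h‖²_{G⁰_c} = l_c ‖h ∘ ψ_c⁻¹‖²_{L²}`. -/
def G0Sq {d : ℕ} (c h : ℝ → Edim d) : ℝ := curveLen c * L2Sq (h ∘ psiInv c)

/-- Homogeneous part `‖h‖²_{Ġ^q_c} = l_c^{1-2q} ‖h ∘ ψ_c⁻¹‖²_{Ḣ^q}`. -/
def GdotSq {d : ℕ} (q : ℝ) (c h : ℝ → Edim d) : ℝ :=
  curveLen c ^ (1 - 2 * q) * homSobSq q (h ∘ psiInv c)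

/-- Homogeneous seminorm `‖h‖_{Ġ^q_c}`. -/
def GdotNorm {d : ℕ} (q : ℝ) (c h : ℝ → Edim d) : ℝ := Real.sqrt (GdotSq q c h)

/-- The reparametrization-invariant Sobolev metric of order `q`:
`‖h‖²_{G^q_c} = l_c ‖h∘ψ_c⁻¹‖²_{L²} + l_c^{1-2q} ‖h∘ψ_c⁻¹‖²_{Ḣ^q}`. -/
def GSq {d : ℕ} (q : ℝ) (c h : ℝ → Edim d) : ℝ := G0Sq c h + GdotSq q c h

/-- The norm `‖h‖_{G^q_c}`. -/
def Gnorm {d : ℕ} (q : ℝ) (c h : ℝ → Edim d) : ℝ := Real.sqrt (GSq q c h)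

/-- The space `Imm(S¹,ℝ^d)` of smooth immersed closed curves. -/
def Imm (d : ℕ) : Set (ℝ → Edim d) :=
  {c | Function.Periodic c 1 ∧ ContDiff ℝ (⊤ : ℕ∞) c ∧ ∀ θ, deriv c θ ≠ 0}

/-- The space `I^r(S¹,ℝ^d)` of Sobolev immersions of class `H^r` (`r > 3/2`). -/
def SobImm (d : ℕ) (r : ℝ) : Set (ℝ → Edim d) :=
  {c | Function.Periodic c 1 ∧ Continuous c ∧
    Summable (fun n : ℤ => (1 + (n : ℝ) ^ 2) ^ r * coeffNormSq c n) ∧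
    ∀ θ, deriv c θ ≠ 0}

/-- Time derivative `∂_t c(t)` of a path of curves. -/
def pathVel {d : ℕ} (p : ℝ → ℝ → Edim d) (t : ℝ) : ℝ → Edim d :=
  fun θ => deriv (fun s => p s θ) t

/-- `G^q`-length of a path of curves over the time interval `[a,b]`. -/
def pathLenOn {d : ℕ} (q : ℝ) (p : ℝ → ℝ → Edim d) (a b : ℝ) : ℝ :=
  ∫ t in a..b, Gnorm q (p t) (pathVel p t)

/-- `G^q`-length of a path of curves over `[0,1]`. -/
def pathLen {d : ℕ} (q : ℝ) (p : ℝ → ℝ → Edim d) : ℝ := pathLenOn q p 0 1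

/-- Admissible (`C¹` in time) paths in `S` joining `c₀` to `c₁`. -/
def IsPathIn {d : ℕ} (S : Set (ℝ → Edim d)) (c₀ c₁ : ℝ → Edim d)
    (p : ℝ → ℝ → Edim d) : Prop :=
  p 0 = c₀ ∧ p 1 = c₁ ∧ (∀ t ∈ Set.Icc (0:ℝ) 1, p t ∈ S) ∧
    ∀ θ : ℝ, ContDiffOn ℝ 1 (fun t => p t θ) (Set.Icc (0:ℝ) 1)

/-- Geodesic distance of the metric `G^q` on the space `S` of curves:
the infimum of the `G^q`-lengths of admissible paths joining `c₀` to `c₁`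
(`∞` if there is no such path). -/
def geodDist {d : ℕ} (q : ℝ) (S : Set (ℝ → Edim d)) (c₀ c₁ : ℝ → Edim d) : ℝ≥0∞ :=
  ⨅ (p : ℝ → ℝ → Edim d) (_ : IsPathIn S c₀ c₁ p), ENNReal.ofReal (pathLen q p)

/-- The metric ball of radius `ρ` around `c₀` for the geodesic distance of `G^r`
on `I^r(S¹,ℝ^d)`. -/
def GBall {d : ℕ} (r : ℝ) (c₀ : ℝ → Edim d) (ρ : ℝ) : Set (ℝ → Edim d) :=
  {c | c ∈ SobImm d r ∧ geodDist r (SobImm d r) c₀ c < ENNReal.ofReal ρ}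

/-- A geodesic of `(S, G^q)` on the time interval `I`: a constant-speed path in
`S` that is locally length-minimizing. -/
def IsGeodesicOn {d : ℕ} (q : ℝ) (S : Set (ℝ → Edim d)) (p : ℝ → ℝ → Edim d)
    (I : Set ℝ) : Prop :=
  (∀ t ∈ I, p t ∈ S) ∧
  (∀ θ : ℝ, ContDiffOn ℝ 1 (fun t => p t θ) I) ∧
  (∃ v : ℝ, ∀ t ∈ I, Gnorm q (p t) (pathVel p t) = v) ∧
  ∀ t ∈ I, ∃ ε > 0, ∀ a ∈ I, ∀ b ∈ I, t - ε ≤ a → a ≤ b → b ≤ t + ε →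
    ENNReal.ofReal (pathLenOn q p a b) = geodDist q S (p a) (p b)


/-- The round circle of radius `ρ` centered at the origin in `ℝ²`. -/
def roundCircle (ρ : ℝ) : ℝ → Edim 2 := fun θ =>
  (EuclideanSpace.equiv (Fin 2) ℝ).symm
    ![ρ * Real.cos (2 * Real.pi * θ), ρ * Real.sin (2 * Real.pi * θ)]

/-- The path of shrinking round circles `c(t)(θ) = (1-t)(cos 2πθ, sin 2πθ)`. -/
def shrinkPath : ℝ → ℝ → Edim 2 := fun t => roundCircle (1 - t)

/-! ### Auxiliary lemmas for Statement 8 -/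

section AuxShrink

open Real

/-- Identification of `ℝ² ` with `Fin 2 → ℝ`. -/
abbrev E2 : (Fin 2 → ℝ) ≃L[ℝ] Edim 2 := (EuclideanSpace.equiv (Fin 2) ℝ).symm

@[simp] lemma E2_apply (v : Fin 2 → ℝ) (i : Fin 2) : (E2 v) i = v i := rfl

lemma normE2 (a b : ℝ) : ‖E2 ![a, b]‖ = Real.sqrt (a ^ 2 + b ^ 2) := by
  rw [EuclideanSpace.norm_eq]
  simp [Fin.sum_univ_two, Real.norm_eq_abs, sq_abs]

lemma roundCircle_smul (ρ θ : ℝ) : roundCircle ρ θ = ρ • roundCircle 1 θ := by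
  unfold roundCircle
  rw [← (EuclideanSpace.equiv (Fin 2) ℝ).symm.map_smul]
  congr 1
  funext i
  fin_cases i <;> simp

/-- Derivative (in `θ`) of the unit circle. -/
def duC (θ : ℝ) : Edim 2 :=
  E2 ![(-Real.sin (2 * π * θ)) * (2 * π), (Real.cos (2 * π * θ)) * (2 * π)]

lemma hasDerivAt_roundCircle_one (θ : ℝ) :
    HasDerivAt (roundCircle 1) (duC θ) θ := by
  have hg : HasDerivAt (fun θ : ℝ => ![Real.cos (2*π*θ), Real.sin (2*π*θ)])
      ![(-Real.sin (2*π*θ)) * (2*π), (Real.cos (2*π*θ)) * (2*π)] θ := by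
    rw [hasDerivAt_pi]
    intro i
    fin_cases i <;> simp
    · exact ((hasDerivAt_id θ).const_mul (2*π)).cos.congr_deriv (by simp only [id_eq]; ring)
    · exact ((hasDerivAt_id θ).const_mul (2*π)).sin.congr_deriv (by simp only [id_eq]; ring)
  have hfun : roundCircle 1 = fun θ => E2 ![Real.cos (2*π*θ), Real.sin (2*π*θ)] := by
    funext θ; simp [roundCircle]
  rw [hfun]
  exact (E2.toContinuousLinearMap.hasFDerivAt).comp_hasDerivAt θ hg

lemma hasDerivAt_roundCircle (ρ θ : ℝ) :
    HasDerivAt (roundCircle ρ) (ρ • duC θ) θ := by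
  have : roundCircle ρ = fun θ => ρ • roundCircle 1 θ := funext fun θ => roundCircle_smul ρ θ
  rw [this]
  exact (hasDerivAt_roundCircle_one θ).const_smul ρ

lemma deriv_roundCircle (ρ θ : ℝ) : deriv (roundCircle ρ) θ = ρ • duC θ :=
  (hasDerivAt_roundCircle ρ θ).deriv

lemma norm_duC (θ : ℝ) : ‖duC θ‖ = 2 * π := by
  rw [duC, normE2]
  have h : (-Real.sin (2*π*θ) * (2*π)) ^ 2 + (Real.cos (2*π*θ) * (2*π)) ^ 2 = (2*π)^2 := by
    nlinarith [Real.sin_sq_add_cos_sq (2*π*θ)]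
  rw [h, Real.sqrt_sq (by positivity)]

lemma norm_deriv_roundCircle (ρ θ : ℝ) : ‖deriv (roundCircle ρ) θ‖ = |ρ| * (2 * π) := by
  rw [deriv_roundCircle, norm_smul, norm_duC, Real.norm_eq_abs]

lemma curveLen_roundCircle (ρ : ℝ) : curveLen (roundCircle ρ) = |ρ| * (2 * π) := by
  unfold curveLen
  simp [norm_deriv_roundCircle]

lemma psi_roundCircle (ρ : ℝ) (hρ : ρ ≠ 0) : psi (roundCircle ρ) = fun θ => θ := by
  funext θ
  unfold psi
  rw [curveLen_roundCircle]
  simp only [norm_deriv_roundCircle]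
  rw [intervalIntegral.integral_const]
  have h0 : |ρ| * (2*π) ≠ 0 := by positivity
  field_simp
  simp only [smul_eq_mul, sub_zero]; ring

lemma psiInv_roundCircle (ρ : ℝ) (hρ : ρ ≠ 0) : psiInv (roundCircle ρ) = fun θ => θ := by
  unfold psiInv
  rw [psi_roundCircle ρ hρ]
  funext x
  exact Function.leftInverse_invFun (fun a b h => h) x

lemma pathVel_shrinkPath (t : ℝ) :
    pathVel shrinkPath t = fun θ => -(roundCircle 1 θ) := by
  funext θ
  unfold pathVel
  have h2 : (fun s : ℝ => shrinkPath s θ) = fun s => (1 - s) • roundCircle 1 θ := by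
    funext s; exact roundCircle_smul (1 - s) θ
  rw [h2]
  have := ((hasDerivAt_id t).const_sub 1).smul_const (roundCircle 1 θ)
  simpa using this.deriv

end AuxShrink

section AuxFourier

open Real

lemma intE (m : ℤ) :
    (∫ θ in (0:ℝ)..1, Complex.exp (2*π*Complex.I*(m:ℂ)*θ)) = if m = 0 then 1 else 0 := by
  by_cases hm : m = 0
  · simp [hm]
  · have hc : (2*(π:ℂ)*Complex.I*(m:ℂ)) ≠ 0 := by
      simp [Real.pi_ne_zero, Complex.I_ne_zero, hm]
    rw [show (fun θ : ℝ => Complex.exp (2*π*Complex.I*(m:ℂ)*θ))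
        = fun θ : ℝ => Complex.exp ((2*π*Complex.I*(m:ℂ))*θ) from rfl,
      integral_exp_mul_complex hc]
    have h1 : Complex.exp (2*(π:ℂ)*Complex.I*(m:ℂ)) = 1 := by
      simpa [mul_comm, mul_assoc, mul_left_comm] using Complex.exp_int_mul_two_pi_mul_I m
    simp [hm, h1]

lemma cE_intervalIntegrable (c : ℂ) (a b : ℝ) :
    IntervalIntegrable (fun θ : ℝ => Complex.exp (c*θ)) MeasureTheory.volume a b :=
  (Complex.continuous_exp.comp (continuous_const.mul Complex.continuous_ofReal)).intervalIntegrable a b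

lemma fCoeff_cos (n : ℤ) :
    fCoeff (fun θ => Real.cos (2*π*θ)) n
      = ((if n = 1 then 1 else 0) + (if n = -1 then 1 else 0)) / 2 := by
  unfold fCoeff
  have key : ∀ θ : ℝ, Complex.exp (-2*π*Complex.I*(n:ℂ)*θ) * ((Real.cos (2*π*θ) : ℝ) : ℂ)
      = (Complex.exp (2*π*Complex.I*((1 - n : ℤ):ℂ)*θ)
        + Complex.exp (2*π*Complex.I*((-1 - n : ℤ):ℂ)*θ)) / 2 := by
    intro θ
    rw [Complex.ofReal_cos, Complex.cos,
      show (2*π*Complex.I*((1 - n : ℤ):ℂ)*θ : ℂ)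
        = (-2*π*Complex.I*(n:ℂ)*θ) + ((2*π*θ : ℝ) : ℂ) * Complex.I by push_cast; ring,
      show (2*π*Complex.I*((-1 - n : ℤ):ℂ)*θ : ℂ)
        = (-2*π*Complex.I*(n:ℂ)*θ) + (-((2*π*θ : ℝ) : ℂ)) * Complex.I by push_cast; ring,
      Complex.exp_add, Complex.exp_add]
    ring
  rw [intervalIntegral.integral_congr (fun θ _ => key θ)]
  rw [intervalIntegral.integral_div, intervalIntegral.integral_add
    (cE_intervalIntegrable _ _ _) (cE_intervalIntegrable _ _ _), intE, intE]
  have h1 : (1 - n = 0) ↔ (n = 1) := by omega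
  have h2 : (-1 - n = 0) ↔ (n = -1) := by omega
  simp only [h1, h2]

lemma fCoeff_sin (n : ℤ) :
    fCoeff (fun θ => Real.sin (2*π*θ)) n
      = ((if n = -1 then 1 else 0) - (if n = 1 then 1 else 0)) * Complex.I / 2 := by
  unfold fCoeff
  have key : ∀ θ : ℝ, Complex.exp (-2*π*Complex.I*(n:ℂ)*θ) * ((Real.sin (2*π*θ) : ℝ) : ℂ)
      = (Complex.exp (2*π*Complex.I*((-1 - n : ℤ):ℂ)*θ)
        - Complex.exp (2*π*Complex.I*((1 - n : ℤ):ℂ)*θ)) * Complex.I / 2 := by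
    intro θ
    rw [Complex.ofReal_sin, Complex.sin,
      show (2*π*Complex.I*((1 - n : ℤ):ℂ)*θ : ℂ)
        = (-2*π*Complex.I*(n:ℂ)*θ) + ((2*π*θ : ℝ) : ℂ) * Complex.I by push_cast; ring,
      show (2*π*Complex.I*((-1 - n : ℤ):ℂ)*θ : ℂ)
        = (-2*π*Complex.I*(n:ℂ)*θ) + (-((2*π*θ : ℝ) : ℂ)) * Complex.I by push_cast; ring,
      Complex.exp_add, Complex.exp_add]
    ring
  rw [intervalIntegral.integral_congr (fun θ _ => key θ)]
  rw [intervalIntegral.integral_div, intervalIntegral.integral_mul_const,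
    intervalIntegral.integral_sub (cE_intervalIntegrable _ _ _) (cE_intervalIntegrable _ _ _),
    intE, intE]
  have h1 : (1 - n = 0) ↔ (n = 1) := by omega
  have h2 : (-1 - n = 0) ↔ (n = -1) := by omega
  simp only [h1, h2]

lemma fCoeff_neg (f : ℝ → ℝ) (n : ℤ) : fCoeff (fun θ => -f θ) n = -fCoeff f n := by
  unfold fCoeff
  rw [← intervalIntegral.integral_neg]
  apply intervalIntegral.integral_congr
  intro θ _
  push_cast
  ring

end AuxFourier

section AuxNorms

open Real

lemma pathVel_comp0 (t : ℝ) :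
    (fun θ => pathVel shrinkPath t θ 0) = fun θ => -Real.cos (2*π*θ) := by
  rw [pathVel_shrinkPath]
  funext θ
  show (-(roundCircle 1 θ)) 0 = -Real.cos (2*π*θ)
  rw [show (-(roundCircle 1 θ)) 0 = -(roundCircle 1 θ 0) from rfl]
  simp [roundCircle]

lemma pathVel_comp1 (t : ℝ) :
    (fun θ => pathVel shrinkPath t θ 1) = fun θ => -Real.sin (2*π*θ) := by
  rw [pathVel_shrinkPath]
  funext θ
  show (-(roundCircle 1 θ)) 1 = -Real.sin (2*π*θ)
  rw [show (-(roundCircle 1 θ)) 1 = -(roundCircle 1 θ 1) from rfl]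
  simp [roundCircle]

lemma coeffNormSq_pathVel (t : ℝ) (n : ℤ) :
    coeffNormSq (pathVel shrinkPath t) n = if n = 1 ∨ n = -1 then 1/2 else 0 := by
  unfold coeffNormSq
  rw [Fin.sum_univ_two, pathVel_comp0, pathVel_comp1]
  rw [show (fun θ => -Real.cos (2*π*θ)) = (fun θ => -(fun θ' => Real.cos (2*π*θ')) θ) from rfl,
    show (fun θ => -Real.sin (2*π*θ)) = (fun θ => -(fun θ' => Real.sin (2*π*θ')) θ) from rfl,
    fCoeff_neg, fCoeff_neg, norm_neg, norm_neg, fCoeff_cos, fCoeff_sin]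
  rcases eq_or_ne n 1 with h1 | h1
  · subst h1; norm_num [Complex.norm_def, Complex.normSq]
  rcases eq_or_ne n (-1) with h2 | h2
  · subst h2; norm_num [Complex.norm_def, Complex.normSq]
  · simp [h1, h2]

lemma homSobSq_pathVel (q t : ℝ) : homSobSq q (pathVel shrinkPath t) = 1 := by
  unfold homSobSq
  rw [tsum_eq_sum (s := ({1, -1} : Finset ℤ)) (by
    intro n hn
    have h1 : n ≠ 1 := by intro h; apply hn; simp [h]
    have h2 : n ≠ -1 := by intro h; apply hn; simp [h]
    simp [coeffNormSq_pathVel, h1, h2])]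
  rw [Finset.sum_pair (by decide : (1:ℤ) ≠ -1)]
  simp [coeffNormSq_pathVel, Real.one_rpow]
  norm_num [Real.one_rpow]

lemma L2Sq_pathVel (t : ℝ) : L2Sq (pathVel shrinkPath t) = 1 := by
  unfold L2Sq
  rw [pathVel_shrinkPath]
  have hn : ∀ θ : ℝ, ‖-(roundCircle 1 θ)‖ ^ 2 = 1 := by
    intro θ
    rw [norm_neg]
    have : roundCircle 1 θ = E2 ![Real.cos (2*π*θ), Real.sin (2*π*θ)] := by simp [roundCircle]
    rw [this, normE2]
    rw [Real.sq_sqrt (by positivity)]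
    nlinarith [Real.sin_sq_add_cos_sq (2*π*θ)]
  rw [intervalIntegral.integral_congr (fun θ _ => hn θ)]
  simp

end AuxNorms

section AuxG

open Real MeasureTheory

lemma sqrt_add_le' (x y : ℝ) (hx : 0 ≤ x) (hy : 0 ≤ y) :
    Real.sqrt (x + y) ≤ Real.sqrt x + Real.sqrt y := by
  have h := Real.sqrt_le_sqrt (show x + y ≤ (Real.sqrt x + Real.sqrt y) ^ 2 by
    nlinarith [Real.sq_sqrt hx, Real.sq_sqrt hy, Real.sqrt_nonneg x, Real.sqrt_nonneg y])
  rwa [Real.sqrt_sq (by positivity)] at h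

lemma Gval (q t : ℝ) (ht : t < 1) :
    Gnorm q (shrinkPath t) (pathVel shrinkPath t)
      = Real.sqrt ((1 - t) * (2*π) + ((1 - t) * (2*π)) ^ (1 - 2*q)) := by
  have hs : (0:ℝ) < 1 - t := by linarith
  have hρ : (1 - t) ≠ 0 := ne_of_gt hs
  have hcomp : (pathVel shrinkPath t ∘ psiInv (shrinkPath t)) = pathVel shrinkPath t := by
    show pathVel shrinkPath t ∘ psiInv (roundCircle (1 - t)) = _
    rw [psiInv_roundCircle _ hρ]
    rfl
  have hlen : curveLen (shrinkPath t) = (1 - t) * (2*π) := by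
    show curveLen (roundCircle (1 - t)) = _
    rw [curveLen_roundCircle, abs_of_pos hs]
  unfold Gnorm GSq G0Sq GdotSq
  rw [hcomp, hlen, L2Sq_pathVel, homSobSq_pathVel, mul_one, mul_one]

lemma key_ineq (q t : ℝ) (ht0 : 0 ≤ t) (ht1 : t < 1) :
    Real.sqrt ((1 - t) * (2*π) + ((1 - t) * (2*π)) ^ (1 - 2*q))
      ≤ Real.sqrt (2*π) + (2*π) ^ ((1 - 2*q)/2) * (1 - t) ^ ((1 - 2*q)/2) := by
  have hs0 : (0:ℝ) < 1 - t := by linarith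
  have hs1 : 1 - t ≤ 1 := by linarith
  have hx : (0:ℝ) ≤ (1 - t) * (2*π) := by positivity
  have hy : (0:ℝ) ≤ ((1 - t) * (2*π)) ^ (1 - 2*q) := Real.rpow_nonneg hx _
  calc Real.sqrt ((1 - t) * (2*π) + ((1 - t) * (2*π)) ^ (1 - 2*q))
      ≤ Real.sqrt ((1 - t) * (2*π)) + Real.sqrt (((1 - t) * (2*π)) ^ (1 - 2*q)) :=
        sqrt_add_le' _ _ hx hy
    _ ≤ Real.sqrt (2*π) + (2*π) ^ ((1 - 2*q)/2) * (1 - t) ^ ((1 - 2*q)/2) := by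
        apply add_le_add
        · exact Real.sqrt_le_sqrt (by nlinarith [Real.pi_pos])
        · rw [Real.sqrt_eq_rpow, ← Real.rpow_mul hx,
            show (1 - 2*q) * (1/2) = (1 - 2*q)/2 by ring,
            Real.mul_rpow hs0.le (by positivity), mul_comm]

lemma one_sub_rpow_intble (α : ℝ) (hα : -1 < α) :
    IntervalIntegrable (fun t : ℝ => (1 - t) ^ α) MeasureTheory.volume 0 1 := by
  have h := (intervalIntegral.intervalIntegrable_rpow' (a := 0) (b := 1) hα).comp_sub_left 1
  simpa using h.symm

lemma B_intble (α : ℝ) (hα : -1 < α) :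
    IntervalIntegrable (fun t : ℝ => Real.sqrt (2*π) + (2*π) ^ α * (1 - t) ^ α)
      MeasureTheory.volume 0 1 :=
  intervalIntegrable_const.add ((one_sub_rpow_intble α hα).const_mul _)

lemma one_sub_rpow_integral (α : ℝ) (hα : -1 < α) :
    ∫ t in (0:ℝ)..1, (1 - t) ^ α = 1 / (α + 1) := by
  have h := intervalIntegral.integral_comp_sub_left (a := 0) (b := 1) (fun s : ℝ => s ^ α) 1
  rw [h]
  norm_num
  rw [integral_rpow (Or.inl hα)]
  rw [Real.one_rpow, Real.zero_rpow (by linarith : α + 1 ≠ 0)]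
  norm_num

lemma B_integral (α : ℝ) (hα : -1 < α) :
    ∫ t in (0:ℝ)..1, (Real.sqrt (2*π) + (2*π) ^ α * (1 - t) ^ α)
      = Real.sqrt (2*π) + (2*π) ^ α * (1 / (α + 1)) := by
  rw [intervalIntegral.integral_add intervalIntegrable_const
    ((one_sub_rpow_intble α hα).const_mul _),
    intervalIntegral.integral_const, intervalIntegral.integral_const_mul,
    one_sub_rpow_integral α hα]
  norm_num

lemma contDiff_roundCircle (ρ : ℝ) : ContDiff ℝ (⊤ : ℕ∞) (roundCircle ρ) := by
  have hg : ContDiff ℝ (⊤ : ℕ∞) (fun θ : ℝ => ![ρ * Real.cos (2*π*θ), ρ * Real.sin (2*π*θ)]) := by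
    rw [contDiff_pi]
    intro i
    fin_cases i <;> simp
    · exact contDiff_const.mul (Real.contDiff_cos.comp ((contDiff_const.mul contDiff_id)))
    · exact contDiff_const.mul (Real.contDiff_sin.comp ((contDiff_const.mul contDiff_id)))
  exact (E2.toContinuousLinearMap.contDiff).comp hg

lemma periodic_roundCircle (ρ : ℝ) : Function.Periodic (roundCircle ρ) 1 := by
  intro θ
  unfold roundCircle
  congr 1
  funext i
  fin_cases i <;> simp [mul_add, Real.cos_add_two_pi, Real.sin_add_two_pi]

lemma shrink_mem_Imm (t : ℝ) (ht : t ∈ Set.Ico (0:ℝ) 1) : shrinkPath t ∈ Imm 2 := by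
  refine ⟨periodic_roundCircle _, contDiff_roundCircle _, fun θ => ?_⟩
  show deriv (roundCircle (1 - t)) θ ≠ 0
  rw [deriv_roundCircle]
  have h1 : (1 - t) ≠ 0 := by have := ht.2; intro h; linarith [ht.2, (by linarith : t = 1)]
  have h2 : duC θ ≠ 0 := by
    intro h
    have := norm_duC θ
    rw [h, norm_zero] at this
    nlinarith [Real.pi_pos]
  exact smul_ne_zero h1 h2

lemma shrink_one_not_Imm : shrinkPath 1 ∉ Imm 2 := by
  intro h
  apply h.2.2 0
  have hconst : shrinkPath 1 = fun _ : ℝ => (0 : Edim 2) := by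
    funext θ
    rw [show shrinkPath 1 θ = roundCircle (1 - 1) θ from rfl, roundCircle_smul]
    norm_num
  rw [hconst]
  exact deriv_const 0 _

end AuxG

/-- the shrinking circles have finite `G^q`-length for
`0 ≤ q < 3/2`, with the bound `C/(3/2 - q)`; in particular a path of finite
`G^q`-length leaves the space of immersions. -/
theorem shrinkPath_finite_length :
    ∃ C : ℝ, 0 < C ∧ ∀ q : ℝ, 0 ≤ q → q < 3 / 2 →
      IntervalIntegrable (fun t => Gnorm q (shrinkPath t) (pathVel shrinkPath t))
        MeasureTheory.volume 0 1 ∧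
      pathLen q shrinkPath ≤ C / (3 / 2 - q) ∧
      (∀ t ∈ Set.Ico (0:ℝ) 1, shrinkPath t ∈ Imm 2) ∧
      shrinkPath 1 ∉ Imm 2 := by
  have hπ : (3:ℝ) < Real.pi := Real.pi_gt_three
  refine ⟨5 * Real.pi, by positivity, fun q hq0 hq32 => ?_⟩
  have hα : (-1:ℝ) < (1 - 2*q)/2 := by linarith
  have hD : (0:ℝ) < 3/2 - q := by linarith
  -- a.e. t ≠ 1
  have hne : ∀ᵐ t : ℝ ∂MeasureTheory.volume, t ≠ 1 := by
    rw [MeasureTheory.ae_iff]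
    have h1 : {t : ℝ | ¬ t ≠ 1} = {1} := by ext x; simp
    rw [h1]
    exact Real.volume_singleton
  have hBint : IntervalIntegrable
      (fun t : ℝ => Real.sqrt (2*Real.pi) + (2*Real.pi) ^ ((1 - 2*q)/2) * (1 - t) ^ ((1 - 2*q)/2))
      MeasureTheory.volume 0 1 := B_intble _ hα
  have hle : ∀ t : ℝ, 0 ≤ t → t < 1 →
      Real.sqrt ((1 - t) * (2*Real.pi) + ((1 - t) * (2*Real.pi)) ^ (1 - 2*q))
        ≤ Real.sqrt (2*Real.pi) + (2*Real.pi) ^ ((1 - 2*q)/2) * (1 - t) ^ ((1 - 2*q)/2) :=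
    fun t h0 h1 => key_ineq q t h0 h1
  have hG'cont : ContinuousOn
      (fun t : ℝ => Real.sqrt ((1 - t) * (2*Real.pi) + ((1 - t) * (2*Real.pi)) ^ (1 - 2*q)))
      (Set.Ioo (0:ℝ) 1) := by
    apply Real.continuous_sqrt.comp_continuousOn
    apply ContinuousOn.add
    · fun_prop
    · apply ContinuousOn.rpow_const
      · fun_prop
      · intro t ht
        left
        have h2 : (0:ℝ) < 1 - t := by linarith [ht.2]
        positivity
  have hG'intOn : MeasureTheory.IntegrableOn
      (fun t : ℝ => Real.sqrt ((1 - t) * (2*Real.pi) + ((1 - t) * (2*Real.pi)) ^ (1 - 2*q)))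
      (Set.Ioc (0:ℝ) 1) MeasureTheory.volume := by
    rw [integrableOn_Ioc_iff_integrableOn_Ioo]
    apply MeasureTheory.Integrable.mono'
      ((intervalIntegrable_iff_integrableOn_Ioo_of_le (by norm_num)).mp hBint)
      (hG'cont.aestronglyMeasurable measurableSet_Ioo)
    filter_upwards [MeasureTheory.ae_restrict_mem measurableSet_Ioo] with t ht
    rw [Real.norm_eq_abs, abs_of_nonneg (Real.sqrt_nonneg _)]
    exact hle t ht.1.le ht.2
  have hG'int : IntervalIntegrable
      (fun t : ℝ => Real.sqrt ((1 - t) * (2*Real.pi) + ((1 - t) * (2*Real.pi)) ^ (1 - 2*q)))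
      MeasureTheory.volume 0 1 :=
    (intervalIntegrable_iff_integrableOn_Ioc_of_le (by norm_num)).mpr hG'intOn
  have hFint : IntervalIntegrable (fun t => Gnorm q (shrinkPath t) (pathVel shrinkPath t))
      MeasureTheory.volume 0 1 := by
    rw [intervalIntegrable_iff_integrableOn_Ioc_of_le (by norm_num)]
    apply MeasureTheory.Integrable.congr hG'intOn
    filter_upwards [MeasureTheory.ae_restrict_mem measurableSet_Ioc,
      MeasureTheory.ae_restrict_of_ae hne] with t ht htne
    exact (Gval q t (lt_of_le_of_ne ht.2 htne)).symm
  refine ⟨hFint, ?_, fun t ht => shrink_mem_Imm t ht, shrink_one_not_Imm⟩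
  have h1 : pathLen q shrinkPath
      = ∫ t in (0:ℝ)..1, Real.sqrt ((1 - t) * (2*Real.pi) + ((1 - t) * (2*Real.pi)) ^ (1 - 2*q)) := by
    apply intervalIntegral.integral_congr_ae
    filter_upwards [hne] with t htne hmem
    rw [Set.uIoc_of_le (by norm_num : (0:ℝ) ≤ 1)] at hmem
    exact Gval q t (lt_of_le_of_ne hmem.2 htne)
  have h2 : (∫ t in (0:ℝ)..1, Real.sqrt ((1 - t) * (2*Real.pi) + ((1 - t) * (2*Real.pi)) ^ (1 - 2*q)))
      ≤ ∫ t in (0:ℝ)..1,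
        (Real.sqrt (2*Real.pi) + (2*Real.pi) ^ ((1 - 2*q)/2) * (1 - t) ^ ((1 - 2*q)/2)) := by
    apply intervalIntegral.integral_mono_ae_restrict (by norm_num) hG'int hBint
    filter_upwards [MeasureTheory.ae_restrict_mem measurableSet_Icc,
      MeasureTheory.ae_restrict_of_ae hne] with t ht htne
    exact hle t ht.1 (lt_of_le_of_ne ht.2 htne)
  have h3 : (∫ t in (0:ℝ)..1,
        (Real.sqrt (2*Real.pi) + (2*Real.pi) ^ ((1 - 2*q)/2) * (1 - t) ^ ((1 - 2*q)/2)))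
      = Real.sqrt (2*Real.pi) + (2*Real.pi) ^ ((1 - 2*q)/2) * (1/((1 - 2*q)/2 + 1)) :=
    B_integral _ hα
  have hα1 : (1 - 2*q)/2 + 1 = 3/2 - q := by ring
  have hsq : Real.sqrt (2*Real.pi) ≤ 2*Real.pi := by
    have h := Real.sqrt_le_sqrt (show 2*Real.pi ≤ (2*Real.pi)^2 by nlinarith)
    rwa [Real.sqrt_sq (by positivity)] at h
  have hpow : (2*Real.pi) ^ ((1 - 2*q)/2) ≤ 2*Real.pi := by
    calc (2*Real.pi) ^ ((1 - 2*q)/2) ≤ (2*Real.pi) ^ ((1:ℝ)/2) :=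
          Real.rpow_le_rpow_of_exponent_le (by nlinarith) (by linarith)
    _ = Real.sqrt (2*Real.pi) := (Real.sqrt_eq_rpow _).symm
    _ ≤ 2*Real.pi := hsq
  have hinv : (0:ℝ) < (3/2 - q)⁻¹ := inv_pos.mpr hD
  have hDD : (3/2 - q) * (3/2 - q)⁻¹ = 1 := mul_inv_cancel₀ hD.ne'
  have hkey : (1:ℝ) ≤ 3/2 * (3/2 - q)⁻¹ := by
    have h := mul_le_mul_of_nonneg_right (show (3:ℝ)/2 - q ≤ 3/2 by linarith) hinv.le
    rwa [hDD] at h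
  rw [h1]
  calc (∫ t in (0:ℝ)..1, Real.sqrt ((1 - t) * (2*Real.pi) + ((1 - t) * (2*Real.pi)) ^ (1 - 2*q)))
      ≤ ∫ t in (0:ℝ)..1,
        (Real.sqrt (2*Real.pi) + (2*Real.pi) ^ ((1 - 2*q)/2) * (1 - t) ^ ((1 - 2*q)/2)) := h2
  _ = Real.sqrt (2*Real.pi) + (2*Real.pi) ^ ((1 - 2*q)/2) * (1/(3/2 - q)) := by rw [h3, hα1]
  _ ≤ 2*Real.pi + 2*Real.pi * (1/(3/2 - q)) :=
      add_le_add hsq (mul_le_mul_of_nonneg_right hpow (by positivity))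
  _ ≤ 5 * Real.pi / (3/2 - q) := by
      rw [show (1:ℝ)/(3/2 - q) = (3/2 - q)⁻¹ from one_div _,
        show 5 * Real.pi / (3/2 - q) = 5 * Real.pi * (3/2 - q)⁻¹ from div_eq_mul_inv _ _]
      nlinarith [Real.pi_pos, hkey, hinv]

end
end

section
/- Let c₀, c₁ ∈ Imm(S¹,ℝ^d) be immersed closed curves. If l_{c₁} ≤ diam(c₀), then (1/4)·diam(c₀) ≤ ‖c₀ − c₁‖_{L^∞}, where diam(c_i) denotes the diameter of the image of c_i and l_{c₁} the length of c₁. -/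
open MeasureTheory intervalIntegral
open scoped BigOperators ENNReal RealInnerProductSpace

noncomputable section

-- auxiliary: distance between two points on a smooth closed curve ≤ half length
lemma dist_le_half_curveLen {d : ℕ} (c : ℝ → Edim d) (hp : Function.Periodic c 1)
    (hc : ContDiff ℝ (⊤ : ℕ∞) c) (t s : ℝ) : 2 * dist (c t) (c s) ≤ curveLen c := by
  have hdc : Continuous (deriv c) := hc.continuous_deriv (by simp)
  have hcd : Differentiable ℝ c := hc.differentiable (by simp)
  have hdp : Function.Periodic (deriv c) 1 := by
    intro x
    have h1 : (fun y => c (y + 1)) = c := funext hp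
    calc deriv c (x + 1) = deriv (fun y => c (y + 1)) x := (deriv_comp_add_const c 1 x).symm
      _ = deriv c x := by rw [h1]
  have hint : ∀ a b : ℝ, IntervalIntegrable (fun σ => ‖deriv c σ‖) volume a b :=
    fun a b => (hdc.norm).intervalIntegrable a b
  set t' := t - ⌊t - s⌋ with ht'
  have hct' : c t' = c t := by
    simpa using hp.sub_int_mul_eq (f := c) (x := t) ⌊t - s⌋
  have hst : s ≤ t' := by
    have := Int.sub_floor_div_mul_nonneg (t - s) one_pos
    have h2 := Int.floor_le (t - s)
    nlinarith [Int.fract_nonneg (t - s), Int.fract_lt_one (t - s), Int.self_sub_floor (t - s)]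
  have hts : t' ≤ s + 1 := by
    nlinarith [Int.fract_nonneg (t - s), Int.fract_lt_one (t - s), Int.self_sub_floor (t - s)]
  have ftc : ∀ a b : ℝ, a ≤ b → ‖c b - c a‖ ≤ ∫ σ in a..b, ‖deriv c σ‖ := by
    intro a b hab
    have h1 : ∫ σ in a..b, deriv c σ = c b - c a :=
      integral_deriv_eq_sub (fun x _ => hcd x) (hdc.intervalIntegrable a b)
    rw [← h1]
    exact intervalIntegral.norm_integral_le_integral_norm hab
  have h1 := ftc s t' hst
  have h2 := ftc t' (s + 1) hts
  have hcs1 : c (s + 1) = c s := hp s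
  have hsum : (∫ σ in s..t', ‖deriv c σ‖) + ∫ σ in t'..(s+1), ‖deriv c σ‖ = curveLen c := by
    rw [integral_add_adjacent_intervals (hint s t') (hint t' (s+1))]
    have hnp : Function.Periodic (fun σ => ‖deriv c σ‖) 1 := fun x => by simp [hdp x]
    have := hnp.intervalIntegral_add_eq s 0
    simpa [curveLen] using this
  have hd1 : dist (c t) (c s) = ‖c t' - c s‖ := by rw [hct', dist_eq_norm]
  have hd2 : dist (c t) (c s) = ‖c (s+1) - c t'‖ := by
    rw [hcs1, hct', ← dist_eq_norm, dist_comm]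
  linarith

theorem diam_aux_main (d : ℕ) (c₀ c₁ : ℝ → Edim d)
    (hp₀ : Function.Periodic c₀ 1) (hc₀ : ContDiff ℝ (⊤ : ℕ∞) c₀)
    (hp₁ : Function.Periodic c₁ 1) (hc₁ : ContDiff ℝ (⊤ : ℕ∞) c₁)
    (hlen : curveLen c₁ ≤ Metric.diam (Set.range c₀)) :
    (1 / 4) * Metric.diam (Set.range c₀) ≤ ⨆ θ : ℝ, ‖c₀ θ - c₁ θ‖ := by
  set M := ⨆ θ : ℝ, ‖c₀ θ - c₁ θ‖ with hM
  have hf : Continuous fun θ => ‖c₀ θ - c₁ θ‖ := (hc₀.continuous.sub hc₁.continuous).norm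
  have hfp : Function.Periodic (fun θ => ‖c₀ θ - c₁ θ‖) 1 := fun x => by
    simp only [hp₀ x, hp₁ x]
  have hbdd : BddAbove (Set.range fun θ => ‖c₀ θ - c₁ θ‖) := by
    obtain ⟨C, hC⟩ := (isCompact_Icc (a := (0:ℝ)) (b := 1)).bddAbove_image
      hf.continuousOn
    refine ⟨C, ?_⟩
    rintro _ ⟨θ, rfl⟩
    have h1 : ‖c₀ θ - c₁ θ‖ = ‖c₀ (θ - ⌊θ⌋) - c₁ (θ - ⌊θ⌋)‖ := by
      simpa using (hfp.sub_int_mul_eq (x := θ) ⌊θ⌋).symm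
    simp only []
    rw [h1]
    refine hC ⟨θ - ⌊θ⌋, ⟨?_, ?_⟩, rfl⟩
    · linarith [Int.floor_le θ]
    · linarith [Int.lt_floor_add_one θ]
  have hle : ∀ θ, ‖c₀ θ - c₁ θ‖ ≤ M := fun θ => le_ciSup hbdd θ
  have hM0 : 0 ≤ M := le_trans (norm_nonneg _) (hle 0)
  have hl0 : 0 ≤ curveLen c₁ :=
    intervalIntegral.integral_nonneg zero_le_one (fun x _ => norm_nonneg _)
  have hdiam : Metric.diam (Set.range c₀) ≤ 2 * M + curveLen c₁ / 2 := by
    apply Metric.diam_le_of_forall_dist_le (by linarith)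
    rintro x ⟨t, rfl⟩ y ⟨s, rfl⟩
    have h1 : dist (c₀ t) (c₁ t) ≤ M := by rw [dist_eq_norm]; exact hle t
    have h3 : dist (c₁ s) (c₀ s) ≤ M := by
      rw [dist_comm, dist_eq_norm]; exact hle s
    have h2 : 2 * dist (c₁ t) (c₁ s) ≤ curveLen c₁ :=
      dist_le_half_curveLen c₁ hp₁ hc₁ t s
    calc dist (c₀ t) (c₀ s) ≤ dist (c₀ t) (c₁ t) + dist (c₁ t) (c₁ s) + dist (c₁ s) (c₀ s) :=
          dist_triangle4 _ _ _ _
      _ ≤ 2 * M + curveLen c₁ / 2 := by linarith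
  linarith

/-- diameter lemma: if `l_{c₁} ≤ diam(c₀)` then
`(1/4) diam(c₀) ≤ ‖c₀ - c₁‖_∞`. -/
theorem diam_le_four_sup_dist (d : ℕ) (c₀ c₁ : ℝ → Edim d)
    (h₀ : c₀ ∈ Imm d) (h₁ : c₁ ∈ Imm d)
    (hlen : curveLen c₁ ≤ Metric.diam (Set.range c₀)) :
    (1 / 4) * Metric.diam (Set.range c₀) ≤ ⨆ θ : ℝ, ‖c₀ θ - c₁ θ‖ := by
  obtain ⟨hp₀, hc₀, -⟩ := h₀
  obtain ⟨hp₁, hc₁, -⟩ := h₁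
  exact diam_aux_main d c₀ c₁ hp₀ hc₀ hp₁ hc₁ hlen

end
end
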